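/- If an ADHM datum X = (A,B,I,J) is costable (no nonzero subspace S of V satisfies A(S) ⊆ S, B(S) ⊆ S, and S ⊆ ker J), then the derivative D_Xμ at X is surjective onto End(V). -/
import Mathlib

open LinearMap

/-- If `trace (M ∘ j) = 0` for all `j`, then `M = 0`. -/
lemma adhm_trace_key {V W : Type} [AddCommGroup V] [Module ℂ V] [FiniteDimensional ℂ V]
    [AddCommGroup W] [Module ℂ W] [FiniteDimensional ℂ W] (M : W →ₗ[ℂ] V)
    (h : ∀ j : V →ₗ[ℂ] W, LinearMap.trace ℂ V (M ∘ₗ j) = 0) : M = 0 := by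
  ext w
  rw [LinearMap.zero_apply, ← Module.forall_dual_apply_eq_zero_iff ℂ]
  intro f
  have hcomp : M ∘ₗ dualTensorHom ℂ V W (f ⊗ₜ[ℂ] w) =
      dualTensorHom ℂ V V (f ⊗ₜ[ℂ] (M w)) := by
    ext x; simp
  have := h (dualTensorHom ℂ V W (f ⊗ₜ[ℂ] w))
  rw [hcomp] at this
  simpa using this

/-- The trace pairing `C ↦ (b ↦ trace (C * b))` as a linear map into the dual. -/
noncomputable def adhm_traceDual (V : Type) [AddCommGroup V] [Module ℂ V]
    [FiniteDimensional ℂ V] :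
    Module.End ℂ V →ₗ[ℂ] Module.Dual ℂ (Module.End ℂ V) where
  toFun C := (LinearMap.trace ℂ V) ∘ₗ (LinearMap.mulLeft ℂ C)
  map_add' C D := by
    ext b; simp [add_mul]
  map_smul' c C := by
    ext b; simp [smul_mul_assoc]

lemma adhm_traceDual_surjective (V : Type) [AddCommGroup V] [Module ℂ V]
    [FiniteDimensional ℂ V] : Function.Surjective (adhm_traceDual V) := by
  have hinj : Function.Injective (adhm_traceDual V) := by
    rw [← LinearMap.ker_eq_bot, LinearMap.ker_eq_bot']
    intro C hC
    apply adhm_trace_key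
    intro j
    have := LinearMap.congr_fun hC j
    simpa [adhm_traceDual, Module.End.mul_eq_comp] using this
  exact (LinearMap.injective_iff_surjective_of_finrank_eq_finrank
    (Subspace.dual_finrank_eq).symm).mp hinj

/-- If X = (A,B,I,J) is costable, then the derivative of the ADHM map at X
is surjective onto End(V). -/
theorem adhm_derivative_surjective_of_costable
    {V W : Type} [AddCommGroup V] [Module ℂ V] [FiniteDimensional ℂ V]
    [AddCommGroup W] [Module ℂ W] [FiniteDimensional ℂ W]
    (A B : Module.End ℂ V) (I : W →ₗ[ℂ] V) (J : V →ₗ[ℂ] W)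
    (hcostable : ∀ S : Submodule ℂ V, Submodule.map A S ≤ S → Submodule.map B S ≤ S →
      S ≤ LinearMap.ker J → S = ⊥) :
    Function.Surjective
      (fun x : Module.End ℂ V × Module.End ℂ V × (W →ₗ[ℂ] V) × (V →ₗ[ℂ] W) =>
        A * x.2.1 - x.2.1 * A + x.1 * B - B * x.1
          + (I ∘ₗ x.2.2.2 : Module.End ℂ V) + (x.2.2.1 ∘ₗ J : Module.End ℂ V)) := by
  -- Package the map as a linear map T
  set T : (Module.End ℂ V × Module.End ℂ V × (W →ₗ[ℂ] V) × (V →ₗ[ℂ] W)) →ₗ[ℂ]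
      Module.End ℂ V :=
    { toFun := fun x =>
        A * x.2.1 - x.2.1 * A + x.1 * B - B * x.1
          + (I ∘ₗ x.2.2.2 : Module.End ℂ V) + (x.2.2.1 ∘ₗ J : Module.End ℂ V)
      map_add' := fun x y => by
        obtain ⟨a, b, i, j⟩ := x
        obtain ⟨a', b', i', j'⟩ := y
        simp only [Prod.fst_add, Prod.snd_add, mul_add, add_mul, LinearMap.comp_add,
          LinearMap.add_comp]
        abel
      map_smul' := fun c x => by
        obtain ⟨a, b, i, j⟩ := x
        simp only [Prod.smul_fst, Prod.smul_snd, mul_smul_comm, smul_mul_assoc,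
          LinearMap.comp_smul, LinearMap.smul_comp, RingHom.id_apply]
        module } with hT
  suffices hsurj : Function.Surjective T by exact hsurj
  rw [← LinearMap.range_eq_top]
  by_contra hne
  obtain ⟨φ, hφne, hφ⟩ := Submodule.exists_dual_map_eq_bot_of_lt_top
    (lt_top_iff_ne_top.mpr hne) inferInstance
  have hvanish : ∀ x, φ (T x) = 0 := by
    intro x
    have : φ (T x) ∈ Submodule.map φ (LinearMap.range T) :=
      Submodule.mem_map_of_mem (LinearMap.mem_range_self T x)
    rw [hφ] at this
    simpa using this
  -- Represent φ via the trace pairing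
  obtain ⟨C, hC⟩ := adhm_traceDual_surjective V φ
  have htr : ∀ x, LinearMap.trace ℂ V (C * T x) = 0 := by
    intro x
    have := hvanish x
    rw [← hC] at this
    simpa [adhm_traceDual] using this
  have hCne : C ≠ 0 := by
    rintro rfl
    apply hφne
    rw [← hC]
    ext b
    simp [adhm_traceDual]
  -- Step 1: C * A = A * C
  have hCA : C * A = A * C := by
    have key : ∀ b : Module.End ℂ V,
        LinearMap.trace ℂ V ((C * A - A * C) ∘ₗ b) = 0 := by
      intro b
      have h1 := htr (0, b, 0, 0)
      simp only [hT, LinearMap.coe_mk, AddHom.coe_mk, zero_mul, mul_zero, sub_zero,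
        add_zero, zero_add, LinearMap.comp_zero, LinearMap.zero_comp] at h1
      -- h1 : trace (C * (A * b - b * A)) = 0
      have h2 : C * (A * b - b * A) = (C * A) * b - C * (b * A) := by
        rw [mul_sub, ← mul_assoc]
      rw [h2] at h1
      have h3 : LinearMap.trace ℂ V (C * (b * A)) = LinearMap.trace ℂ V ((A * C) * b) := by
        have := LinearMap.trace_mul_comm ℂ (C * b) A
        calc LinearMap.trace ℂ V (C * (b * A)) = LinearMap.trace ℂ V ((C * b) * A) := by
              rw [mul_assoc]
          _ = LinearMap.trace ℂ V (A * (C * b)) := LinearMap.trace_mul_comm ℂ (C * b) A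
          _ = LinearMap.trace ℂ V ((A * C) * b) := by rw [mul_assoc]
      rw [map_sub, h3, ← map_sub] at h1
      have h4 : (C * A) * b - (A * C) * b = (C * A - A * C) ∘ₗ b := by
        rw [← Module.End.mul_eq_comp, sub_mul]
      rw [h4] at h1
      exact h1
    have := adhm_trace_key (C * A - A * C) key
    rwa [sub_eq_zero] at this
  -- Step 2: B * C = C * B
  have hCB : C * B = B * C := by
    have key : ∀ a : Module.End ℂ V,
        LinearMap.trace ℂ V ((B * C - C * B) ∘ₗ a) = 0 := by
      intro a
      have h1 := htr (a, 0, 0, 0)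
      simp only [hT, LinearMap.coe_mk, AddHom.coe_mk, zero_mul, mul_zero, sub_zero,
        add_zero, zero_add, zero_sub, LinearMap.comp_zero, LinearMap.zero_comp] at h1
      -- h1 : trace (C * (a * B - B * a)) = 0  (possibly with different normalization)
      have h1' : LinearMap.trace ℂ V (C * (a * B - B * a)) = 0 := h1
      have h3 : LinearMap.trace ℂ V (C * (a * B)) = LinearMap.trace ℂ V ((B * C) * a) := by
        calc LinearMap.trace ℂ V (C * (a * B)) = LinearMap.trace ℂ V ((C * a) * B) := by
              rw [mul_assoc]
          _ = LinearMap.trace ℂ V (B * (C * a)) := LinearMap.trace_mul_comm ℂ (C * a) B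
          _ = LinearMap.trace ℂ V ((B * C) * a) := by rw [mul_assoc]
      have h4 : C * (a * B - B * a) = C * (a * B) - (C * B) * a := by
        rw [mul_sub, mul_assoc]
      rw [h4, map_sub, h3, ← map_sub] at h1'
      have h5 : (B * C) * a - (C * B) * a = (B * C - C * B) ∘ₗ a := by
        rw [← Module.End.mul_eq_comp, sub_mul]
      rwa [h5] at h1'
    have := adhm_trace_key (B * C - C * B) key
    rw [sub_eq_zero] at this
    exact this.symm
  -- Step 3: J ∘ C = 0
  have hJC : J ∘ₗ (C : Module.End ℂ V) = 0 := by
    apply adhm_trace_key (J ∘ₗ (C : Module.End ℂ V))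
    intro i
    have h1 := htr (0, 0, i, 0)
    simp only [hT, LinearMap.coe_mk, AddHom.coe_mk, zero_mul, mul_zero, sub_zero,
      add_zero, zero_add, zero_sub, neg_zero, LinearMap.comp_zero, LinearMap.zero_comp] at h1
    -- h1 : trace (C * (i ∘ₗ J)) = 0
    have h2 : LinearMap.trace ℂ V (C * (i ∘ₗ J)) =
        LinearMap.trace ℂ W ((J ∘ₗ (C : Module.End ℂ V)) ∘ₗ i) := by
      have : (C : Module.End ℂ V) * (i ∘ₗ J) = ((C : Module.End ℂ V) ∘ₗ i) ∘ₗ J := by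
        rw [Module.End.mul_eq_comp, LinearMap.comp_assoc]
      rw [this, ← LinearMap.trace_comp_comm' ((C : Module.End ℂ V) ∘ₗ i) J,
        LinearMap.comp_assoc]
    rw [← h2]
    exact h1
  -- Conclude via costability applied to range C
  have hrange : LinearMap.range (C : Module.End ℂ V) = ⊥ := by
    apply hcostable
    · rintro x ⟨y, hy, rfl⟩
      obtain ⟨v, rfl⟩ := hy
      refine ⟨A v, ?_⟩
      have := LinearMap.congr_fun hCA v
      simpa [Module.End.mul_apply] using this
    · rintro x ⟨y, hy, rfl⟩
      obtain ⟨v, rfl⟩ := hy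
      refine ⟨B v, ?_⟩
      have := LinearMap.congr_fun hCB v
      simpa [Module.End.mul_apply] using this
    · rintro x ⟨v, rfl⟩
      have := LinearMap.congr_fun hJC v
      simpa using this
  exact hCne (LinearMap.range_eq_bot.mp hrange)
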